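/- Let D_i ⊂ ℂ^{n_i}, i = 1,…,m, be bounded domains. Then for every (z_1,…,z_m) ∈ D_1 × ⋯ × D_m, the squeezing function of the product satisfies s_{D_1×⋯×D_m}(z_1,…,z_m) ≥ ( √( 1/s_{D_1}(z_1)² + ⋯ + 1/s_{D_m}(z_m)² ) )^{-1}. -/

import Mathlib

open scoped Pointwise

noncomputable section

/-- `ℂⁿ` with the Euclidean norm. -/
abbrev Cn (n : ℕ) : Type := EuclideanSpace ℂ (Fin n)

/-- A (bounded) domain: a nonempty open connected bounded set. -/
def IsBoundedDomain {E : Type*} [NormedAddCommGroup E] [NormedSpace ℂ E] (D : Set E) : Prop :=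
  IsOpen D ∧ IsConnected D ∧ Bornology.IsBounded D

/-- The squeezing function `s_D(z)` of a bounded domain `D` at `z ∈ D`: the supremum, over all
injective holomorphic maps `F : D → B(0,1)` with `F z = 0`, of all radii `r > 0` with
`B(0,r) ⊆ F(D)`. -/
noncomputable def squeezing {E : Type*} [NormedAddCommGroup E] [InnerProductSpace ℂ E]
    (D : Set E) (z : E) : ℝ :=
  sSup {r : ℝ | 0 < r ∧ ∃ F : E → E, DifferentiableOn ℂ F D ∧ Set.InjOn F D ∧
    Set.MapsTo F D (Metric.ball 0 1) ∧ F z = 0 ∧ Metric.ball 0 r ⊆ F '' D}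

/-- The `𝒟`-squeezing function `s^𝒟_D(z)`: as `squeezing`, but with target the bounded convex
balanced domain `𝒟` and with the dilates `r • 𝒟` in place of balls. -/
noncomputable def dSqueezing {n : ℕ} (𝒟 D : Set (Cn n)) (z : Cn n) : ℝ :=
  sSup {r : ℝ | 0 < r ∧ ∃ F : Cn n → Cn n, DifferentiableOn ℂ F D ∧ Set.InjOn F D ∧
    Set.MapsTo F D 𝒟 ∧ F z = 0 ∧ r • 𝒟 ⊆ F '' D}

/-- Two sets (in possibly different complex normed spaces) are biholomorphic. -/
def Biholomorphic {E F : Type*} [NormedAddCommGroup E] [NormedSpace ℂ E]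
    [NormedAddCommGroup F] [NormedSpace ℂ F] (U : Set E) (V : Set F) : Prop :=
  ∃ (f : E → F) (g : F → E), DifferentiableOn ℂ f U ∧ DifferentiableOn ℂ g V ∧
    Set.MapsTo f U V ∧ Set.MapsTo g V U ∧
    (∀ z ∈ U, g (f z) = z) ∧ (∀ w ∈ V, f (g w) = w)

/-- A domain in `ℂⁿ` is irreducible if it is not biholomorphic to a Cartesian product of
domains of lower dimension. -/
def IrreducibleDomain {n : ℕ} (D : Set (Cn n)) : Prop :=
  ¬ ∃ (p q : ℕ) (D₁ : Set (Cn p)) (D₂ : Set (Cn q)),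
      0 < p ∧ 0 < q ∧ p < n ∧ q < n ∧
      IsOpen D₁ ∧ IsConnected D₁ ∧ IsOpen D₂ ∧ IsConnected D₂ ∧
      Biholomorphic D (D₁ ×ˢ D₂)

/-- Plurisubharmonicity on a set: upper semicontinuity together with the sub-mean-value
inequality on every closed complex disc contained in the set. -/
def IsPlurisubharmonicOn {E : Type*} [NormedAddCommGroup E] [NormedSpace ℂ E]
    (u : E → ℝ) (U : Set E) : Prop :=
  UpperSemicontinuousOn u U ∧
    ∀ z ∈ U, ∀ v : E, ∀ r : ℝ, 0 < r →
      (∀ w : ℂ, ‖w‖ ≤ r → z + w • v ∈ U) →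
      u z ≤ (2 * Real.pi)⁻¹ *
        ∫ θ in (0:ℝ)..(2 * Real.pi), u (z + ((r : ℂ) * Complex.exp ((θ : ℂ) * Complex.I)) • v)

/-- A domain is pseudoconvex if `-log dist(·, ∂D)` is plurisubharmonic on it. -/
def IsPseudoconvex {n : ℕ} (D : Set (Cn n)) : Prop :=
  IsOpen D ∧ IsPlurisubharmonicOn (fun z => -Real.log (Metric.infDist z Dᶜ)) D

/-- A symmetric domain: a bounded domain each of whose points is an isolated fixed point of a
holomorphic involution of the domain. -/
def IsSymmetricDomain {n : ℕ} (D : Set (Cn n)) : Prop :=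
  IsBoundedDomain D ∧
    ∀ z ∈ D, ∃ σ : Cn n → Cn n, DifferentiableOn ℂ σ D ∧ Set.MapsTo σ D D ∧
      (∀ w ∈ D, σ (σ w) = w) ∧ σ z = z ∧
      ∃ U ∈ nhds z, ∀ w ∈ U ∩ D, σ w = w → w = z

/-! ### Hermitian Jordan triple systems -/

/-- A Hermitian Jordan triple system structure on `ℂⁿ`: a triple product, symmetric and
`ℂ`-bilinear in the outer variables, conjugate-linear in the middle one, satisfying the
Jordan identity. -/
structure IsHJTS {n : ℕ} (T : Cn n → Cn n → Cn n → Cn n) : Prop where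
  symm : ∀ x y z, T x y z = T z y x
  add_fst : ∀ x x' y z, T (x + x') y z = T x y z + T x' y z
  smul_fst : ∀ (c : ℂ) x y z, T (c • x) y z = c • T x y z
  add_mid : ∀ x y y' z, T x (y + y') z = T x y z + T x y' z
  smul_mid : ∀ (c : ℂ) x y z, T x (c • y) z = (starRingEnd ℂ) c • T x y z
  jordan : ∀ x y u v w,
    T x y (T u v w) - T (T x y u) v w = T u v (T x y w) - T u (T y x v) w

/-- Positivity of a Hermitian Jordan triple system: any "eigenvalue" `λ` with
`{x,x,x} = λ x`, `x ≠ 0`, is real and positive. -/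
def IsPHJTS {n : ℕ} (T : Cn n → Cn n → Cn n → Cn n) : Prop :=
  IsHJTS T ∧ ∀ x : Cn n, x ≠ 0 → ∀ c : ℂ, T x x x = c • x → c.im = 0 ∧ 0 < c.re

/-- A tripotent: `{e,e,e} = 2e` (i.e. `e⁽³⁾ = Q(e)e = e`). -/
def IsTripotent {n : ℕ} (T : Cn n → Cn n → Cn n → Cn n) (e : Cn n) : Prop :=
  T e e e = (2 : ℂ) • e

/-- Orthogonality of tripotents: `D(e₁,e₂) = 0`. -/
def OrthTrip {n : ℕ} (T : Cn n → Cn n → Cn n → Cn n) (e₁ e₂ : Cn n) : Prop :=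
  ∀ z : Cn n, T e₁ e₂ z = 0

/-- A primitive (= minimal) tripotent: a nonzero tripotent that dominates no nonzero
tripotent other than itself. -/
def IsPrimitiveTripotent {n : ℕ} (T : Cn n → Cn n → Cn n → Cn n) (e : Cn n) : Prop :=
  IsTripotent T e ∧ e ≠ 0 ∧
    ∀ c : Cn n, IsTripotent T c → c ≠ 0 →
      (∃ d : Cn n, IsTripotent T d ∧ OrthTrip T c d ∧ e = c + d) → c = e

/-- The rank of a tripotent: the least number of mutually orthogonal primitive tripotents
summing to it. -/
noncomputable def tripotentRank {n : ℕ} (T : Cn n → Cn n → Cn n → Cn n) (e : Cn n) : ℕ :=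
  sInf {k : ℕ | ∃ c : Fin k → Cn n, (∀ i, IsPrimitiveTripotent T (c i)) ∧
    (Pairwise fun i j => OrthTrip T (c i) (c j)) ∧ e = ∑ i, c i}

/-- The rank of a positive Hermitian Jordan triple system: the largest rank of a tripotent. -/
noncomputable def jtsRank {n : ℕ} (T : Cn n → Cn n → Cn n → Cn n) : ℕ :=
  sSup {r : ℕ | ∃ e : Cn n, IsTripotent T e ∧ e ≠ 0 ∧ tripotentRank T e = r}

/-- The open unit ball for the spectral norm of a positive Hermitian Jordan triple system:
the points admitting a decomposition `x = Σ λᵢ eᵢ` with mutually orthogonal nonzero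
tripotents `eᵢ` and coefficients `0 < λᵢ < 1` (together with `0`). -/
def spectralBall {n : ℕ} (T : Cn n → Cn n → Cn n → Cn n) : Set (Cn n) :=
  {x : Cn n | x = 0 ∨ ∃ (k : ℕ) (lam : Fin k → ℝ) (e : Fin k → Cn n),
    (∀ i, 0 < lam i ∧ lam i < 1) ∧ (∀ i, IsTripotent T (e i) ∧ e i ≠ 0) ∧
    (Pairwise fun i j => OrthTrip T (e i) (e j)) ∧ x = ∑ i, ((lam i : ℂ) • e i)}

/-- `D` is (a realisation of) a bounded symmetric domain of rank `r`: `D` is biholomorphic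
to the spectral-norm unit ball of a positive Hermitian Jordan triple system of rank `r`. -/
def HasRank {n : ℕ} (D : Set (Cn n)) (r : ℕ) : Prop :=
  ∃ T : Cn n → Cn n → Cn n → Cn n,
    IsPHJTS T ∧ Biholomorphic D (spectralBall T) ∧ jtsRank T = r

/-! ### The Kobayashi distance -/

/-- The Poincaré distance on the unit disc `𝔻 ⊂ ℂ`. -/
noncomputable def poincareDist (a b : ℂ) : ℝ :=
  Real.log ((1 + ‖(a - b) / (1 - (starRingEnd ℂ) a * b)‖) /
    (1 - ‖(a - b) / (1 - (starRingEnd ℂ) a * b)‖)) / 2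

/-- The Kobayashi (pseudo)distance of a domain `Ω ⊆ ℂⁿ`: the infimum of the total Poincaré
length over all chains of analytic discs joining the two points. -/
noncomputable def kobayashiDist {n : ℕ} (Ω : Set (Cn n)) (z w : Cn n) : ℝ :=
  sInf {t : ℝ | ∃ (m : ℕ) (f : Fin (m + 1) → ℂ → Cn n) (a b : Fin (m + 1) → ℂ),
    (∀ i, DifferentiableOn ℂ (f i) (Metric.ball 0 1) ∧
      Set.MapsTo (f i) (Metric.ball 0 1) Ω ∧
      a i ∈ Metric.ball (0 : ℂ) 1 ∧ b i ∈ Metric.ball (0 : ℂ) 1) ∧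
    f 0 (a 0) = z ∧ f (Fin.last m) (b (Fin.last m)) = w ∧
    (∀ i : Fin m, f i.castSucc (b i.castSucc) = f i.succ (a i.succ)) ∧
    t = ∑ i, poincareDist (a i) (b i)}

/-- `K_Ω(z; S) = inf_{w ∈ S} K_Ω(z, w)`. -/
noncomputable def kobayashiDistToSet {n : ℕ} (Ω : Set (Cn n)) (z : Cn n)
    (S : Set (Cn n)) : ℝ :=
  sInf {t : ℝ | ∃ w ∈ S, t = kobayashiDist Ω z w}

/-- An analytic subvariety of `Ω`: a subset that is locally, near every point of `Ω`, the
common zero set of finitely many holomorphic functions. -/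
def IsAnalyticSubvariety {n : ℕ} (Ω S : Set (Cn n)) : Prop :=
  S ⊆ Ω ∧ ∀ p ∈ Ω, ∃ U : Set (Cn n), IsOpen U ∧ p ∈ U ∧ U ⊆ Ω ∧
    ∃ (k : ℕ) (f : Fin k → Cn n → ℂ), (∀ i, DifferentiableOn ℂ (f i) U) ∧
      S ∩ U = {z ∈ U | ∀ i, f i z = 0}

/-- `S` is a closed boundary set on which every function continuous on `closure D` and
holomorphic on `D` attains its maximum modulus. -/
def IsMaxModulusSet {n : ℕ} (D S : Set (Cn n)) : Prop :=
  S ⊆ frontier D ∧ IsClosed S ∧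
    ∀ f : Cn n → ℂ, ContinuousOn f (closure D) → DifferentiableOn ℂ f D →
      ∃ x ∈ S, ∀ y ∈ closure D, ‖f y‖ ≤ ‖f x‖

/-- The Shilov boundary of `D`: the smallest closed subset of `∂D` on which every function
continuous on `closure D` and holomorphic on `D` attains its maximum modulus. -/
def IsShilovBoundary {n : ℕ} (D S : Set (Cn n)) : Prop :=
  IsMaxModulusSet D S ∧ ∀ S' : Set (Cn n), IsMaxModulusSet D S' → S ⊆ S'

/-! ### Polydiscs, Wirtinger derivatives, Kähler metrics -/

/-- The unit polydisc `𝔻^p ⊂ ℂ^p`. -/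
def polydisc (p : ℕ) : Set (Cn p) := {w : Cn p | ∀ j, ‖w j‖ < 1}

/-- The Wirtinger derivative `∂f/∂z_k` of `f : ℂⁿ → ℂ` (as a real-differentiable map). -/
noncomputable def wirtinger {n : ℕ} (f : Cn n → ℂ) (z : Cn n) (k : Fin n) : ℂ :=
  (fderiv ℝ f z (EuclideanSpace.single k 1) -
    Complex.I * fderiv ℝ f z (EuclideanSpace.single k Complex.I)) / 2

/-- A Kähler (Hermitian) metric on a domain `D`: a smooth family of positive-definite
Hermitian forms `g z v w` (linear in `v`, conjugate-linear in `w`) whose coefficient matrix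
satisfies the Kähler symmetry `∂_k g_{i j̄} = ∂_i g_{k j̄}` on `D`. -/
structure IsKaehlerMetricOn {n : ℕ} (g : Cn n → Cn n → Cn n → ℂ) (D : Set (Cn n)) : Prop where
  smooth : ∀ v w : Cn n, ContDiffOn ℝ (⊤ : ℕ∞) (fun z => g z v w) D
  add_fst : ∀ z v v' w, g z (v + v') w = g z v w + g z v' w
  smul_fst : ∀ z (c : ℂ) v w, g z (c • v) w = c * g z v w
  hermitian : ∀ z v w, (starRingEnd ℂ) (g z v w) = g z w v
  posdef : ∀ z ∈ D, ∀ v : Cn n, v ≠ 0 → 0 < (g z v v).re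
  kaehler : ∀ z ∈ D, ∀ i j k : Fin n,
    wirtinger (fun w => g w (EuclideanSpace.single i 1) (EuclideanSpace.single j 1)) z k =
      wirtinger (fun w => g w (EuclideanSpace.single k 1) (EuclideanSpace.single j 1)) z i

/-- A holomorphic automorphism of the domain `D`. -/
def IsAutomorphismOf {n : ℕ} (f : Cn n → Cn n) (D : Set (Cn n)) : Prop :=
  DifferentiableOn ℂ f D ∧ Set.MapsTo f D D ∧
    ∃ g : Cn n → Cn n, DifferentiableOn ℂ g D ∧ Set.MapsTo g D D ∧
      (∀ z ∈ D, g (f z) = z) ∧ (∀ z ∈ D, f (g z) = z)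

/-- `f` lies in the identity component `G₀` of `Aut(D)`: it can be joined to the identity by
a continuous path of automorphisms. -/
def InIdentityComponentOfAut {n : ℕ} (f : Cn n → Cn n) (D : Set (Cn n)) : Prop :=
  ∃ H : ℝ → Cn n → Cn n,
    ContinuousOn (fun p : ℝ × Cn n => H p.1 p.2) (Set.Icc (0:ℝ) 1 ×ˢ D) ∧
    (∀ t ∈ Set.Icc (0:ℝ) 1, IsAutomorphismOf (H t) D) ∧
    (∀ z ∈ D, H 0 z = z) ∧ (∀ z ∈ D, H 1 z = f z)

/-- The length of a path with respect to the Hermitian metric `g`. -/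
noncomputable def pathLength {n : ℕ} (g : Cn n → Cn n → Cn n → ℂ) (γ : ℝ → Cn n) : ℝ :=
  ∫ t in (0:ℝ)..1, Real.sqrt
    ((g (γ t) (derivWithin γ (Set.Icc 0 1) t) (derivWithin γ (Set.Icc 0 1) t)).re)

/-- The geodesic distance in `A` induced by the metric `g`: the infimum of `g`-lengths of
`C¹` paths in `A` joining the two points. -/
noncomputable def geodesicDist {n : ℕ} (g : Cn n → Cn n → Cn n → ℂ) (A : Set (Cn n))
    (x y : Cn n) : ℝ :=
  sInf {L : ℝ | ∃ γ : ℝ → Cn n, ContDiffOn ℝ 1 γ (Set.Icc 0 1) ∧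
    Set.MapsTo γ (Set.Icc (0:ℝ) 1) A ∧ γ 0 = x ∧ γ 1 = y ∧ L = pathLength g γ}

end

section SqAux

open Set Metric

variable {E : Type*} [NormedAddCommGroup E] [InnerProductSpace ℂ E]

/-- The defining set of the squeezing function. -/
def sqSet (D : Set E) (z : E) : Set ℝ :=
  {r : ℝ | 0 < r ∧ ∃ F : E → E, DifferentiableOn ℂ F D ∧ Set.InjOn F D ∧
    Set.MapsTo F D (Metric.ball 0 1) ∧ F z = 0 ∧ Metric.ball 0 r ⊆ F '' D}

lemma squeezing_eq_sSup_sqSet (D : Set E) (z : E) : squeezing D z = sSup (sqSet D z) := rfl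

lemma sqSet_pos {D : Set E} {z : E} {r : ℝ} (hr : r ∈ sqSet D z) : 0 < r := hr.1

lemma sqSet_nonempty {D : Set E} (hD : IsBoundedDomain D) {z : E} (hz : z ∈ D) :
    (sqSet D z).Nonempty := by
  obtain ⟨M, hM⟩ := hD.2.2.subset_ball z
  have hM0 : 0 < M := by simpa using hM hz
  obtain ⟨δ, hδ0, hδ⟩ := Metric.isOpen_iff.1 hD.1 z hz
  refine ⟨δ * M⁻¹, mul_pos hδ0 (inv_pos.2 hM0),
    fun x => ((M⁻¹ : ℝ) : ℂ) • (x - z), ?_, ?_, ?_, ?_, ?_⟩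
  · exact ((differentiable_id.sub_const z).const_smul _).differentiableOn
  · intro x _ y _ h
    have hc : ((M⁻¹ : ℝ) : ℂ) ≠ 0 := by
      simpa using (inv_pos.2 hM0).ne'
    have := smul_right_injective E hc h
    exact sub_left_injective this
  · intro x hx
    show ((M⁻¹ : ℝ) : ℂ) • (x - z) ∈ ball 0 1
    have hxz : ‖x - z‖ < M := by
      have := hM hx
      rwa [mem_ball, dist_eq_norm] at this
    rw [mem_ball_zero_iff, norm_smul]
    have : ‖((M⁻¹ : ℝ) : ℂ)‖ = M⁻¹ := by
      rw [Complex.norm_real, Real.norm_eq_abs, abs_of_pos (inv_pos.2 hM0)]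
    rw [this]
    calc M⁻¹ * ‖x - z‖ < M⁻¹ * M := by
          exact mul_lt_mul_of_pos_left hxz (inv_pos.2 hM0)
      _ = 1 := inv_mul_cancel₀ hM0.ne'
  · simp
  · intro y hy
    rw [mem_ball_zero_iff] at hy
    refine ⟨z + ((M : ℝ) : ℂ) • y, hδ ?_, ?_⟩
    · rw [mem_ball, dist_eq_norm]
      have : ‖((M : ℝ) : ℂ)‖ = M := by
        rw [Complex.norm_real, Real.norm_eq_abs, abs_of_pos hM0]
      calc ‖z + ((M : ℝ) : ℂ) • y - z‖ = M * ‖y‖ := by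
            rw [add_sub_cancel_left, norm_smul, this]
        _ < M * (δ * M⁻¹) := mul_lt_mul_of_pos_left hy hM0
        _ = δ := by field_simp
    · show ((M⁻¹ : ℝ) : ℂ) • (z + ((M : ℝ) : ℂ) • y - z) = y
      rw [add_sub_cancel_left, smul_smul, ← Complex.ofReal_mul,
        inv_mul_cancel₀ hM0.ne', Complex.ofReal_one, one_smul]

lemma sqSet_le_one [Nontrivial E] {D : Set E} {z : E} {r : ℝ} (hr : r ∈ sqSet D z) : r ≤ 1 := by
  obtain ⟨hr0, F, _, _, hmaps, _, hball⟩ := hr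
  by_contra h
  push_neg at h
  obtain ⟨x, hx⟩ := exists_ne (0 : E)
  have hx0 : (0:ℝ) < ‖x‖ := norm_pos_iff.2 hx
  have h1 : ‖x‖⁻¹ • x ∈ Metric.ball (0:E) r := by
    rw [mem_ball_zero_iff, norm_smul, norm_inv, norm_norm, inv_mul_cancel₀ hx0.ne']
    exact h
  obtain ⟨w, hw, hFw⟩ := hball h1
  have := hmaps hw
  rw [hFw, mem_ball_zero_iff, norm_smul, norm_inv, norm_norm, inv_mul_cancel₀ hx0.ne'] at this
  exact lt_irrefl _ this

lemma sqSet_exists_approx (S : Set ℝ) (hpos : ∀ r ∈ S, 0 < r) (hne : S.Nonempty)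
    {ε : ℝ} (hε : 0 < ε) : ∃ r ∈ S, 1 / r ^ 2 < 1 / (sSup S) ^ 2 + ε := by
  by_cases hb : BddAbove S
  · obtain ⟨r₀, hr₀⟩ := hne
    have hs0 : 0 < sSup S := (hpos _ hr₀).trans_le (le_csSup hb hr₀)
    set s := sSup S with hs
    have h1 : (0:ℝ) < 1 + ε * s ^ 2 := by positivity
    have hsq1 : 1 < Real.sqrt (1 + ε * s ^ 2) := by
      have h2 := Real.sq_sqrt h1.le
      have h3 := Real.sqrt_nonneg (1 + ε * s ^ 2)
      nlinarith [mul_pos hε (pow_pos hs0 2)]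
    set t₀ := s / Real.sqrt (1 + ε * s ^ 2) with ht₀
    have ht₀0 : 0 < t₀ := div_pos hs0 (lt_trans one_pos hsq1)
    have ht₀s : t₀ < s := div_lt_self hs0 hsq1
    obtain ⟨r, hrS, hrt⟩ := exists_lt_of_lt_csSup ⟨r₀, hr₀⟩ ht₀s
    refine ⟨r, hrS, ?_⟩
    have hr2 : t₀ ^ 2 < r ^ 2 := by
      apply pow_lt_pow_left₀ hrt ht₀0.le
      norm_num
    have ht₀sq : t₀ ^ 2 = s ^ 2 / (1 + ε * s ^ 2) := by
      rw [ht₀, div_pow, Real.sq_sqrt h1.le]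
    have key : 1 / t₀ ^ 2 = 1 / s ^ 2 + ε := by
      rw [ht₀sq]
      field_simp
    calc 1 / r ^ 2 < 1 / t₀ ^ 2 :=
          one_div_lt_one_div_of_lt (by positivity) hr2
      _ = 1 / s ^ 2 + ε := key
  · rw [Real.sSup_of_not_bddAbove hb]
    obtain ⟨r, hrS, hrK⟩ := not_bddAbove_iff.1 hb ((Real.sqrt ε)⁻¹)
    have hε' : 0 < (Real.sqrt ε)⁻¹ := inv_pos.2 (Real.sqrt_pos.2 hε)
    refine ⟨r, hrS, ?_⟩
    have h2 : ((Real.sqrt ε)⁻¹) ^ 2 < r ^ 2 := by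
      apply pow_lt_pow_left₀ hrK hε'.le
      norm_num
    rw [inv_pow, Real.sq_sqrt hε.le] at h2
    have : 1 / r ^ 2 < 1 / ε⁻¹ := one_div_lt_one_div_of_lt (by positivity) h2
    rw [show (1:ℝ) / ε⁻¹ = ε by field_simp] at this
    simpa using this

end SqAux

section ProdAux

open Set Metric

/-- Projection of a sigma-indexed Euclidean space onto a factor. -/
def sigmaProj {m : ℕ} {nd : Fin m → ℕ} (i : Fin m)
    (x : EuclideanSpace ℂ ((i : Fin m) × Fin (nd i))) : Cn (nd i) :=
  WithLp.toLp 2 (fun j => x ⟨i, j⟩)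

lemma euclid_norm_sq {κ : Type*} [Fintype κ] (v : EuclideanSpace ℂ κ) :
    ‖v‖ ^ 2 = ∑ j, ‖v j‖ ^ 2 := by
  rw [EuclideanSpace.norm_eq, Real.sq_sqrt (Finset.sum_nonneg fun j _ => sq_nonneg _)]

lemma sigmaProj_norm_le {m : ℕ} {nd : Fin m → ℕ}
    (x : EuclideanSpace ℂ ((i : Fin m) × Fin (nd i))) (i : Fin m) :
    ‖sigmaProj i x‖ ≤ ‖x‖ := by
  rw [EuclideanSpace.norm_eq (sigmaProj i x), EuclideanSpace.norm_eq x]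
  apply Real.sqrt_le_sqrt
  rw [← Finset.univ_sigma_univ, Finset.sum_sigma]
  exact Finset.single_le_sum (f := fun i' => ∑ j, ‖x ⟨i', j⟩‖ ^ 2)
    (fun i' _ => Finset.sum_nonneg fun j _ => sq_nonneg _) (Finset.mem_univ i)

lemma prod_mem_sqSet {m : ℕ} [Nonempty (Fin m)] {nd : Fin m → ℕ}
    {Ds : (i : Fin m) → Set (Cn (nd i))} {z : (i : Fin m) → Cn (nd i)}
    (r : Fin m → ℝ) (hr : ∀ i, r i ∈ sqSet (Ds i) (z i)) :
    (Real.sqrt (∑ i, 1 / r i ^ 2))⁻¹ ∈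
      sqSet (E := EuclideanSpace ℂ ((i : Fin m) × Fin (nd i)))
        {x : EuclideanSpace ℂ ((i : Fin m) × Fin (nd i)) |
          ∀ i : Fin m, (WithLp.toLp 2 (fun j => x ⟨i, j⟩) : EuclideanSpace ℂ (Fin (nd i))) ∈ Ds i}
        (WithLp.toLp 2 (fun q : (i : Fin m) × Fin (nd i) => z q.1 q.2)) := by
  classical
  set E := EuclideanSpace ℂ ((i : Fin m) × Fin (nd i))
  set Dp : Set E := {x : E |
    ∀ i : Fin m, (WithLp.toLp 2 (fun j => x ⟨i, j⟩) : EuclideanSpace ℂ (Fin (nd i))) ∈ Ds i} with hDp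
  have hmemDp : ∀ (x : E), x ∈ Dp → ∀ i, sigmaProj i x ∈ Ds i := fun x hx i => hx i
  have hrpos : ∀ i, 0 < r i := fun i => (hr i).1
  set A := ∑ i, 1 / r i ^ 2 with hA
  have hApos : 0 < A :=
    Finset.sum_pos (fun i _ => one_div_pos.2 (pow_pos (hrpos i) 2)) Finset.univ_nonempty
  set c := (Real.sqrt A)⁻¹ with hc
  have hcpos : 0 < c := inv_pos.2 (Real.sqrt_pos.2 hApos)
  have hc2 : c ^ 2 = A⁻¹ := by rw [hc, inv_pow, Real.sq_sqrt hApos.le]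
  choose F hdiff hinj hmaps hFz hball using fun i => (hr i).2
  refine ⟨hcpos, fun x => (WithLp.toLp 2 (fun q => ((c / r q.1 : ℝ) : ℂ) *
      (F q.1 (sigmaProj q.1 x)) q.2) : E), ?_, ?_, ?_, ?_, ?_⟩
  · -- differentiability
    apply differentiableOn_euclidean.2
    intro q
    have hcoord : ∀ q' : (i : Fin m) × Fin (nd i), Differentiable ℂ (fun x : E => x q') :=
      fun q' => (EuclideanSpace.proj q' : E →L[ℂ] ℂ).differentiable
    have hg : Differentiable ℂ (fun x : E => sigmaProj q.1 x) :=
      differentiable_euclidean.2 fun j => hcoord ⟨q.1, j⟩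
    have h1 : DifferentiableOn ℂ (fun x : E => F q.1 (sigmaProj q.1 x)) Dp :=
      (hdiff q.1).comp hg.differentiableOn (fun x hx => hmemDp x hx q.1)
    exact (differentiableOn_euclidean.1 h1 q.2).const_mul _
  · -- injectivity
    intro x hx y hy hxy
    ext q
    have hcr : ((c / r q.1 : ℝ) : ℂ) ≠ 0 :=
      Complex.ofReal_ne_zero.2 (div_pos hcpos (hrpos q.1)).ne'
    have hFi : sigmaProj q.1 x = sigmaProj q.1 y := by
      apply hinj q.1 (hmemDp x hx q.1) (hmemDp y hy q.1)
      ext j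
      have h := congrArg (fun v : E => v (⟨q.1, j⟩ : (i : Fin m) × Fin (nd i))) hxy
      exact mul_left_cancel₀ hcr h
    exact congrArg (fun v : Cn (nd q.1) => v q.2) hFi
  · -- maps to unit ball
    intro x hx
    refine mem_ball_zero_iff.2 ?_
    rw [EuclideanSpace.norm_eq]
    rw [show (1:ℝ) = Real.sqrt 1 from Real.sqrt_one.symm]
    apply Real.sqrt_lt_sqrt (Finset.sum_nonneg fun q _ => sq_nonneg _)
    rw [← Finset.univ_sigma_univ, Finset.sum_sigma]
    have inner_eq : ∀ i : Fin m,
        (∑ j, ‖((c / r i : ℝ) : ℂ) * (F i (sigmaProj i x)) j‖ ^ 2)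
          = (c / r i) ^ 2 * ‖F i (sigmaProj i x)‖ ^ 2 := by
      intro i
      rw [euclid_norm_sq, Finset.mul_sum]
      congr 1
      funext j
      rw [norm_mul, mul_pow, Complex.norm_real, Real.norm_eq_abs, sq_abs]
    calc (∑ i : Fin m, ∑ j, ‖((c / r i : ℝ) : ℂ) * (F i (sigmaProj i x)) j‖ ^ 2)
        = ∑ i : Fin m, (c / r i) ^ 2 * ‖F i (sigmaProj i x)‖ ^ 2 :=
          Finset.sum_congr rfl fun i _ => inner_eq i
      _ < ∑ i : Fin m, (c / r i) ^ 2 * 1 := by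
          apply Finset.sum_lt_sum_of_nonempty Finset.univ_nonempty
          intro i _
          apply mul_lt_mul_of_pos_left _ (pow_pos (div_pos hcpos (hrpos i)) 2)
          have hm := hmaps i (hmemDp x hx i)
          rw [mem_ball_zero_iff] at hm
          calc ‖F i (sigmaProj i x)‖ ^ 2
              ≤ ‖F i (sigmaProj i x)‖ * 1 := by
                rw [pow_two]
                exact mul_le_mul_of_nonneg_left hm.le (norm_nonneg _)
            _ < 1 := by rw [mul_one]; exact hm
      _ = c ^ 2 * A := by
          rw [hA, Finset.mul_sum]
          exact Finset.sum_congr rfl fun i _ => by rw [mul_one, div_pow]; ring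
      _ = 1 := by rw [hc2, inv_mul_cancel₀ hApos.ne']
  · -- value at z
    ext q
    show ((c / r q.1 : ℝ) : ℂ) * (F q.1 (z q.1)) q.2 = (0 : E) q
    rw [hFz q.1]
    show ((c / r q.1 : ℝ) : ℂ) * 0 = (0 : E) q
    rw [mul_zero]
    rfl
  · -- ball of radius c inside image
    intro y hy
    rw [mem_ball_zero_iff] at hy
    have hmem : ∀ i, ((r i / c : ℝ) : ℂ) • sigmaProj i y ∈ Metric.ball (0 : Cn (nd i)) (r i) := by
      intro i
      refine mem_ball_zero_iff.2 ?_
      rw [norm_smul, Complex.norm_real, Real.norm_eq_abs,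
        abs_of_pos (div_pos (hrpos i) hcpos)]
      calc (r i / c) * ‖sigmaProj i y‖
          ≤ (r i / c) * ‖y‖ :=
            mul_le_mul_of_nonneg_left (sigmaProj_norm_le y i) (div_pos (hrpos i) hcpos).le
        _ < (r i / c) * c := mul_lt_mul_of_pos_left hy (div_pos (hrpos i) hcpos)
        _ = r i := by field_simp
    choose xx hxxD hxxF using fun i => hball i (hmem i)
    refine ⟨(WithLp.toLp 2 (fun q => xx q.1 q.2) : E), fun i => hxxD i, ?_⟩
    ext q
    show ((c / r q.1 : ℝ) : ℂ) * (F q.1 (xx q.1)) q.2 = y q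
    rw [hxxF q.1]
    show ((c / r q.1 : ℝ) : ℂ) * (((r q.1 / c : ℝ) : ℂ) * y q) = y q
    rw [← mul_assoc, ← Complex.ofReal_mul,
      show c / r q.1 * (r q.1 / c) = 1 by
        rw [div_mul_div_comm, mul_comm c (r q.1)]
        exact div_self (mul_pos (hrpos q.1) hcpos).ne', Complex.ofReal_one, one_mul]

end ProdAux

section Final

open Set Metric

lemma sqSet_not_bddAbove_of_subsingleton {E : Type*} [NormedAddCommGroup E]
    [InnerProductSpace ℂ E] [Subsingleton E] {D : Set E} {z : E} (hz : z ∈ D) :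
    ¬ BddAbove (sqSet D z) := by
  rw [not_bddAbove_iff]
  intro K
  refine ⟨max K 0 + 1, ⟨by positivity, fun _ => 0, differentiableOn_const 0, ?_, ?_, rfl, ?_⟩, ?_⟩
  · exact fun a _ b _ _ => Subsingleton.elim a b
  · intro x _
    refine mem_ball_zero_iff.2 ?_
    rw [norm_zero]
    norm_num
  · exact fun w _ => ⟨z, hz, Subsingleton.elim _ _⟩
  · exact (le_max_left K 0).trans_lt (lt_add_one _)

end Final

/-- **Result (lower bound for the squeezing function of a product).**
For bounded domains `D_i ⊂ ℂ^{n_i}`, `i = 1,…,m`, and every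
`(z_1,…,z_m) ∈ D_1 × ⋯ × D_m`,
`s_{D_1×⋯×D_m}(z_1,…,z_m) ≥ (√(1/s_{D_1}(z_1)² + ⋯ + 1/s_{D_m}(z_m)²))⁻¹`,
where the product is viewed inside `ℂ^{n_1+⋯+n_m}` with its Euclidean structure. -/
theorem squeezing_of_product_lower_bound
    {m : ℕ} (nd : Fin m → ℕ) (Ds : (i : Fin m) → Set (Cn (nd i)))
    (hD : ∀ i, IsBoundedDomain (Ds i))
    (z : (i : Fin m) → Cn (nd i)) (hz : ∀ i, z i ∈ Ds i) :
    (Real.sqrt (∑ i, 1 / (squeezing (Ds i) (z i)) ^ 2))⁻¹ ≤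
      squeezing (E := EuclideanSpace ℂ ((i : Fin m) × Fin (nd i)))
        {x : EuclideanSpace ℂ ((i : Fin m) × Fin (nd i)) |
          ∀ i : Fin m, (WithLp.toLp 2 (fun j => x ⟨i, j⟩) : EuclideanSpace ℂ (Fin (nd i))) ∈ Ds i}
        (WithLp.toLp 2 (fun q : (i : Fin m) × Fin (nd i) => z q.1 q.2)) := by
  classical
  by_cases hι : Nonempty ((i : Fin m) × Fin (nd i))
  case neg =>
    have hs : ∀ i, squeezing (Ds i) (z i) = 0 := by
      intro i
      haveI : IsEmpty (Fin (nd i)) := by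
        by_contra h
        rw [not_isEmpty_iff] at h
        exact hι ⟨⟨i, h.some⟩⟩
      haveI : Subsingleton (Cn (nd i)) := by
        constructor
        intro a b
        ext j
        exact isEmptyElim j
      rw [squeezing_eq_sSup_sqSet]
      exact Real.sSup_of_not_bddAbove (sqSet_not_bddAbove_of_subsingleton (hz i))
    have h0 : (∑ i, 1 / (squeezing (Ds i) (z i)) ^ 2) = 0 := by simp [hs]
    rw [h0, Real.sqrt_zero, inv_zero, squeezing_eq_sSup_sqSet]
    exact Real.sSup_nonneg fun x hx => hx.1.le
  case pos =>
    obtain ⟨q0⟩ := hι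
    haveI : Nonempty (Fin m) := ⟨q0.1⟩
    haveI : Nontrivial (EuclideanSpace ℂ ((i : Fin m) × Fin (nd i))) := by
      refine ⟨EuclideanSpace.single q0 1, 0, fun h => ?_⟩
      have := congrArg (fun v : EuclideanSpace ℂ ((i : Fin m) × Fin (nd i)) => v q0) h
      simp [EuclideanSpace.single_apply] at this
    set s : Fin m → ℝ := fun i => squeezing (Ds i) (z i) with hsdef
    have hSne : ∀ i, (sqSet (Ds i) (z i)).Nonempty := fun i => sqSet_nonempty (hD i) (hz i)
    have hSbdd : BddAbove (sqSet (E := EuclideanSpace ℂ ((i : Fin m) × Fin (nd i)))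
        {x : EuclideanSpace ℂ ((i : Fin m) × Fin (nd i)) |
          ∀ i : Fin m, (WithLp.toLp 2 (fun j => x ⟨i, j⟩) : EuclideanSpace ℂ (Fin (nd i))) ∈ Ds i}
        (WithLp.toLp 2 (fun q : (i : Fin m) × Fin (nd i) => z q.1 q.2))) := ⟨1, fun x hx => sqSet_le_one hx⟩
    rw [squeezing_eq_sSup_sqSet]
    apply le_of_forall_lt
    intro b hb
    rcases le_or_gt b 0 with hb0 | hb0
    · choose r hrS using hSne
      have hmem := prod_mem_sqSet r hrS
      exact lt_of_le_of_lt hb0 (lt_of_lt_of_le hmem.1 (le_csSup hSbdd hmem))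
    · -- b > 0
      have hbinv : 0 < b⁻¹ := inv_pos.2 hb0
      have ht0 : 0 < Real.sqrt (∑ i, 1 / s i ^ 2) := by
        rcases (Real.sqrt_nonneg (∑ i, 1 / s i ^ 2)).lt_or_eq with h | h
        · exact h
        · exfalso
          rw [← h, inv_zero] at hb
          exact absurd hb (not_lt.2 hb0.le)
      have h1 : Real.sqrt (∑ i, 1 / s i ^ 2) < b⁻¹ := by
        have h2 := one_div_lt_one_div_of_lt hb0 hb
        rwa [one_div, one_div, inv_inv] at h2
      have hAlt : (∑ i, 1 / s i ^ 2) < b⁻¹ ^ 2 :=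
        (Real.sqrt_lt' hbinv).1 h1
      have hm0 : (0:ℝ) < m := by
        have : 0 < m := Fin.pos_iff_nonempty.2 ‹Nonempty (Fin m)›
        exact_mod_cast this
      set ε := (b⁻¹ ^ 2 - (∑ i, 1 / s i ^ 2)) / m with hεdef
      have hε : 0 < ε := div_pos (by linarith) hm0
      choose r hrS hrlt using fun i =>
        sqSet_exists_approx (sqSet (Ds i) (z i)) (fun ρ hρ => hρ.1) (hSne i) hε
      have hrlt' : ∀ i, 1 / r i ^ 2 < 1 / s i ^ 2 + ε := hrlt
      have hrpos : ∀ i, 0 < r i := fun i => (hrS i).1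
      have hsum : (∑ i, 1 / r i ^ 2) < b⁻¹ ^ 2 := by
        calc (∑ i, 1 / r i ^ 2) < ∑ i, (1 / s i ^ 2 + ε) :=
              Finset.sum_lt_sum_of_nonempty Finset.univ_nonempty fun i _ => hrlt' i
          _ = (∑ i, 1 / s i ^ 2) + m * ε := by
              rw [Finset.sum_add_distrib, Finset.sum_const, Finset.card_univ,
                Fintype.card_fin, nsmul_eq_mul]
          _ = b⁻¹ ^ 2 := by
              rw [hεdef, mul_div_cancel₀ _ hm0.ne']
              ring
      have hmem := prod_mem_sqSet r hrS
      have hsumpos : 0 < (∑ i, 1 / r i ^ 2) :=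
        Finset.sum_pos (fun i _ => one_div_pos.2 (pow_pos (hrpos i) 2)) Finset.univ_nonempty
      have h3 : Real.sqrt (∑ i, 1 / r i ^ 2) < b⁻¹ := (Real.sqrt_lt' hbinv).2 hsum
      have h4 : 0 < Real.sqrt (∑ i, 1 / r i ^ 2) := Real.sqrt_pos.2 hsumpos
      have h5 := one_div_lt_one_div_of_lt h4 h3
      rw [one_div, one_div, inv_inv] at h5
      exact lt_of_lt_of_le h5 (le_csSup hSbdd hmem)
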